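/- Let Z, W : Fin n → Fin n → ℝ both satisfy the additive transitivity condition, and suppose they agree on one row: Z q j = W q j for all j, for some q. Then Z = W. -/

import Mathlib

/- An additively transitive matrix is a difference of potentials, `Z i j = Z q j - Z q i`, for
any choice of reference index `q`; so row `q` determines the whole matrix. -/

theorem eq_sub_of_additive_transitive {ι G : Type*} [AddCommGroup G] {Z : ι → ι → G}
    (hZ : ∀ i j k, Z i j = Z i k + Z k j) (q i j : ι) : Z i j = Z q j - Z q i :=
  eq_sub_of_add_eq' (hZ q j i).symm

theorem stmt_11 (n : ℕ) (Z W : Fin n → Fin n → ℝ)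
    (hZ : ∀ i j k, Z i j = Z i k + Z k j)
    (hW : ∀ i j k, W i j = W i k + W k j)
    (q : Fin n) (hrow : ∀ j, Z q j = W q j) :
    Z = W := by
  funext i j
  rw [eq_sub_of_additive_transitive hZ q, eq_sub_of_additive_transitive hW q, hrow, hrow]
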